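/- Let ≺ be a left-invariant total order on B_3 whose positive cone is exactly the union of the set of σ1-positive elements and the set {σ2^k : k ≥ 1}. Then ≺ is approximated by its conjugates: for every finite subset S ⊆ B_3 there exists an integer j ≥ 1 such that the conjugate order ≺_h with h = σ2^{-j}σ1 agrees with ≺ on S × S, yet ≺_h ≠ ≺. -/

import Mathlib

/-- The single braid relation of `B₃`: σ₁σ₂σ₁ = σ₂σ₁σ₂. -/
def braidRels3 : Set (FreeGroup (Fin 2)) :=
  { FreeGroup.of 0 * FreeGroup.of 1 * FreeGroup.of 0 *
      (FreeGroup.of 1 * FreeGroup.of 0 * FreeGroup.of 1)⁻¹ }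

/-- The braid group `B₃ = ⟨σ₁, σ₂ | σ₁σ₂σ₁ = σ₂σ₁σ₂⟩`. -/
abbrev B₃ : Type := PresentedGroup braidRels3

def σ₁ : B₃ := PresentedGroup.of 0
def σ₂ : B₃ := PresentedGroup.of 1

/-- A left-invariant total order (left order) on a group `G`. -/
def IsLeftOrder {G : Type*} [Group G] (r : G → G → Prop) : Prop :=
  IsStrictTotalOrder G r ∧ ∀ h f g : G, r f g → r (h * f) (h * g)

/-- The group element represented by a single letter `σᵢ^{±1}`
(`true` = positive letter, `false` = inverse letter). -/
def letterB₃ (x : Fin 2 × Bool) : B₃ :=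
  if x.2 then PresentedGroup.of x.1 else (PresentedGroup.of x.1)⁻¹

/-- An element of `B₃` is σ₁-positive if it is represented by some word in
`σ₁^{±1}, σ₂^{±1}` containing at least one `σ₁` and no `σ₁⁻¹`. -/
def IsSigmaOnePositive (β : B₃) : Prop :=
  ∃ w : List (Fin 2 × Bool),
    (w.map letterB₃).prod = β ∧ ((0 : Fin 2), true) ∈ w ∧ ((0 : Fin 2), false) ∉ w

/-- The conjugate of the order `r` by the group element `h`:
`f ≺_h g` iff `h⁻¹fh ≺ h⁻¹gh`. -/
def conjOrder {G : Type*} [Group G] (r : G → G → Prop) (h : G) : G → G → Prop :=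
  fun f g => r (h⁻¹ * f * h) (h⁻¹ * g * h)

/-!
Write `hⱼ = σ₂⁻ʲσ₁`. By the braid relation, conjugation by `hⱼ` sends `σ₂ᵐ` to `σ₂σ₁ᵐσ₂⁻¹`.
A σ₁-positive braid can be written `σ₂ᵃσ₁c` with `c` free of `σ₁⁻¹`, so its `hⱼ`-conjugate
`σ₂σ₁ʲ⁺ᵃσ₂⁻¹cσ₂⁻ʲσ₁` is σ₁-positive as soon as `j > -a`, and positive powers of `σ₂` have
σ₁-positive conjugates for every `j`. So for large `j` conjugation by `hⱼ` preserves the sign of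
the finitely many quotients `a⁻¹b` with `a, b ∈ S`, and `≺_{hⱼ}` agrees with `≺` on `S`.
Yet `≺_{hⱼ} ≠ ≺`: the braid `σ₂⁻⁽ʲ⁺¹⁾σ₁` is positive, while its `hⱼ`-conjugate is the inverse of
the σ₁-positive braid `σ₂σ₁ʲ⁺¹σ₂⁻²`.
-/

open Filter

namespace IsLeftOrder

variable {G : Type*} [Group G] {r : G → G → Prop}

theorem lt_iff_one_lt_inv_mul (hr : IsLeftOrder r) {a b : G} : r a b ↔ r 1 (a⁻¹ * b) := by
  refine ⟨fun h => ?_, fun h => ?_⟩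
  · simpa using hr.2 a⁻¹ a b h
  · simpa using hr.2 a 1 (a⁻¹ * b) h

theorem not_one_lt_inv (hr : IsLeftOrder r) {g : G} (hg : r 1 g) : ¬ r 1 g⁻¹ := by
  have := hr.1
  intro hg'
  have hg1 : r g 1 := by simpa using hr.lt_iff_one_lt_inv_mul.2 (by simpa using hg')
  exact irrefl_of r 1 (trans_of r hg hg1)

theorem conjOrder_iff (hr : IsLeftOrder r) {h a b : G} :
    conjOrder r h a b ↔ r 1 (h⁻¹ * (a⁻¹ * b) * h) := by
  rw [conjOrder, hr.lt_iff_one_lt_inv_mul]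
  group

theorem conjOrder_ne (hr : IsLeftOrder r) {g h : G} (hg : r 1 g) (hconj : r 1 (h⁻¹ * g⁻¹ * h)) :
    conjOrder r h ≠ r := by
  intro heq
  have hg' : r 1 (h⁻¹ * (1⁻¹ * g) * h) := hr.conjOrder_iff.1 (by rw [heq]; exact hg)
  rw [inv_one, one_mul] at hg'
  exact hr.not_one_lt_inv hg' (by simpa [mul_assoc] using hconj)

theorem eventually_conjOrder_iff (hr : IsLeftOrder r) {ι : Type*} {l : Filter ι} {h : ι → G}
    (hpos : ∀ g, r 1 g → ∀ᶠ i in l, r 1 ((h i)⁻¹ * g * h i)) (S : Finset G) :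
    ∀ᶠ i in l, ∀ a ∈ S, ∀ b ∈ S, (conjOrder r (h i) a b ↔ r a b) := by
  have := hr.1
  have hlt : ∀ a b, r a b → ∀ᶠ i in l, conjOrder r (h i) a b := fun a b hab =>
    (hpos _ (hr.lt_iff_one_lt_inv_mul.1 hab)).mono fun i hi => hr.conjOrder_iff.2 hi
  simp only [eventually_all_finset]
  intro a _ b _
  rcases trichotomous_of r a b with hab | rfl | hba
  · exact (hlt a b hab).mono fun i hi => iff_of_true hi hab
  · exact Eventually.of_forall fun i => iff_of_false (irrefl_of r _) (irrefl_of r a)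
  · exact (hlt b a hba).mono fun i hi =>
      iff_of_false (asymm_of r hi) (asymm_of r hba)

end IsLeftOrder

theorem sigma1_mul_sigma2_mul_sigma1 : σ₁ * σ₂ * σ₁ = σ₂ * σ₁ * σ₂ := by
  have h : PresentedGroup.mk braidRels3 (FreeGroup.of 0 * FreeGroup.of 1 * FreeGroup.of 0 *
      (FreeGroup.of 1 * FreeGroup.of 0 * FreeGroup.of 1)⁻¹) = 1 :=
    PresentedGroup.one_of_mem rfl
  simp only [map_mul, map_inv, mul_inv_eq_one] at h
  exact h

theorem sigma1_inv_mul_sigma2_zpow_mul_sigma1 (m : ℤ) :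
    σ₁⁻¹ * σ₂ ^ m * σ₁ = σ₂ * σ₁ ^ m * σ₂⁻¹ := by
  have h : σ₁⁻¹ * σ₂ * σ₁ = σ₂ * σ₁ * σ₂⁻¹ :=
    calc σ₁⁻¹ * σ₂ * σ₁ = σ₁⁻¹ * (σ₂ * σ₁ * σ₂) * σ₂⁻¹ := by group
    _ = σ₁⁻¹ * (σ₁ * σ₂ * σ₁) * σ₂⁻¹ := by rw [sigma1_mul_sigma2_mul_sigma1]
    _ = σ₂ * σ₁ * σ₂⁻¹ := by group
  calc σ₁⁻¹ * σ₂ ^ m * σ₁ = (σ₁⁻¹ * σ₂ * σ₁⁻¹⁻¹) ^ m := by rw [conj_zpow, inv_inv]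
  _ = (σ₂ * σ₁ * σ₂⁻¹) ^ m := by rw [inv_inv, h]
  _ = σ₂ * σ₁ ^ m * σ₂⁻¹ := conj_zpow

def sigmaOneNonneg : Submonoid B₃ where
  carrier := {β | ∃ w : List (Fin 2 × Bool), (w.map letterB₃).prod = β ∧ ((0 : Fin 2), false) ∉ w}
  mul_mem' := by
    rintro _ _ ⟨u, rfl, hu⟩ ⟨v, rfl, hv⟩
    exact ⟨u ++ v, by simp, by simp [hu, hv]⟩
  one_mem' := ⟨[], by simp, by simp⟩

theorem sigma1_mem_sigmaOneNonneg : σ₁ ∈ sigmaOneNonneg :=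
  ⟨[((0 : Fin 2), true)], by simp [letterB₃, σ₁], by simp⟩

theorem sigma2_zpow_mem_sigmaOneNonneg (m : ℤ) : σ₂ ^ m ∈ sigmaOneNonneg := by
  have h₂ : σ₂ ∈ sigmaOneNonneg := ⟨[((1 : Fin 2), true)], by simp [letterB₃, σ₂], by simp⟩
  have h₂' : σ₂⁻¹ ∈ sigmaOneNonneg := ⟨[((1 : Fin 2), false)], by simp [letterB₃, σ₂], by simp⟩
  induction m using Int.induction_on with
  | zero => simp [sigmaOneNonneg.one_mem]
  | succ n ih => simpa [zpow_add_one] using sigmaOneNonneg.mul_mem ih h₂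
  | pred n ih => simpa [zpow_sub_one] using sigmaOneNonneg.mul_mem ih h₂'

theorem sigma2_mem_sigmaOneNonneg : σ₂ ∈ sigmaOneNonneg := by
  simpa using sigma2_zpow_mem_sigmaOneNonneg 1

theorem sigma2_inv_mem_sigmaOneNonneg : σ₂⁻¹ ∈ sigmaOneNonneg := by
  simpa using sigma2_zpow_mem_sigmaOneNonneg (-1)

theorem isSigmaOnePositive_mul_mul {x y z : B₃} (hx : x ∈ sigmaOneNonneg)
    (hy : IsSigmaOnePositive y) (hz : z ∈ sigmaOneNonneg) : IsSigmaOnePositive (x * y * z) := by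
  obtain ⟨u, rfl, hu⟩ := hx
  obtain ⟨v, rfl, hv₁, hv⟩ := hy
  obtain ⟨w, rfl, hw⟩ := hz
  exact ⟨u ++ v ++ w, by simp [mul_assoc], by simp [hv₁], by simp [hu, hv, hw]⟩

theorem isSigmaOnePositive_sigma1_zpow {n : ℤ} (hn : 0 < n) : IsSigmaOnePositive (σ₁ ^ n) := by
  lift n to ℕ using hn.le
  refine ⟨List.replicate n ((0 : Fin 2), true), by simp [letterB₃, σ₁], ?_, by simp⟩
  simp only [List.mem_replicate, and_true]
  exact_mod_cast hn.ne'

theorem IsSigmaOnePositive.exists_eq_sigma2_zpow_mul_sigma1_mul {β : B₃}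
    (hβ : IsSigmaOnePositive β) : ∃ a : ℤ, ∃ c ∈ sigmaOneNonneg, β = σ₂ ^ a * σ₁ * c := by
  obtain ⟨w, rfl, hpos, hneg⟩ := hβ
  induction w with
  | nil => simp at hpos
  | cons x w ih =>
    have hneg' : ((0 : Fin 2), false) ∉ w := fun h => hneg (List.mem_cons_of_mem _ h)
    by_cases hx : x = ((0 : Fin 2), true)
    · exact ⟨0, _, ⟨w, rfl, hneg'⟩, by simp [hx, letterB₃, σ₁]⟩
    · have hpos' : ((0 : Fin 2), true) ∈ w := (List.mem_cons.1 hpos).resolve_left (Ne.symm hx)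
      obtain ⟨i, b⟩ := x
      have hi : i = 1 := by
        fin_cases i <;> cases b <;> simp_all
      obtain ⟨a, c, hc, hw⟩ := ih hpos' hneg'
      refine ⟨(if b then 1 else -1) + a, c, hc, ?_⟩
      rw [List.map_cons, List.prod_cons, hw, zpow_add, hi]
      cases b <;> simp [letterB₃, σ₂, mul_assoc]

theorem isSigmaOnePositive_sigma2_zpow_mul_sigma1 (t : ℤ) : IsSigmaOnePositive (σ₂ ^ t * σ₁) := by
  simpa using isSigmaOnePositive_mul_mul (sigma2_zpow_mem_sigmaOneNonneg t)
    (isSigmaOnePositive_sigma1_zpow one_pos) sigmaOneNonneg.one_mem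

theorem isSigmaOnePositive_conj_sigma2_pow {k : ℕ} (hk : 1 ≤ k) (j : ℤ) :
    IsSigmaOnePositive ((σ₂ ^ (-j) * σ₁)⁻¹ * σ₂ ^ k * (σ₂ ^ (-j) * σ₁)) := by
  have h : (σ₂ ^ (-j) * σ₁)⁻¹ * σ₂ ^ k * (σ₂ ^ (-j) * σ₁) = σ₂ * σ₁ ^ (k : ℤ) * σ₂⁻¹ := by
    rw [← sigma1_inv_mul_sigma2_zpow_mul_sigma1]
    group
  rw [h]
  exact isSigmaOnePositive_mul_mul sigma2_mem_sigmaOneNonneg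
    (isSigmaOnePositive_sigma1_zpow (by omega)) sigma2_inv_mem_sigmaOneNonneg

theorem IsSigmaOnePositive.eventually_conj {g : B₃} (hg : IsSigmaOnePositive g) :
    ∀ᶠ j : ℤ in atTop, IsSigmaOnePositive ((σ₂ ^ (-j) * σ₁)⁻¹ * g * (σ₂ ^ (-j) * σ₁)) := by
  obtain ⟨a, c, hc, rfl⟩ := hg.exists_eq_sigma2_zpow_mul_sigma1_mul
  filter_upwards [eventually_gt_atTop (-a)] with j hj
  have h : (σ₂ ^ (-j) * σ₁)⁻¹ * (σ₂ ^ a * σ₁ * c) * (σ₂ ^ (-j) * σ₁)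
      = σ₂ * σ₁ ^ (j + a) * (σ₂⁻¹ * c * (σ₂ ^ (-j) * σ₁)) :=
    calc _ = (σ₁⁻¹ * σ₂ ^ (j + a) * σ₁) * (c * (σ₂ ^ (-j) * σ₁)) := by group
    _ = _ := by rw [sigma1_inv_mul_sigma2_zpow_mul_sigma1]; group
  rw [h]
  refine isSigmaOnePositive_mul_mul sigma2_mem_sigmaOneNonneg
    (isSigmaOnePositive_sigma1_zpow (by omega)) ?_
  exact mul_mem (mul_mem sigma2_inv_mem_sigmaOneNonneg hc)
    (mul_mem (sigma2_zpow_mem_sigmaOneNonneg _) sigma1_mem_sigmaOneNonneg)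

theorem isSigmaOnePositive_conj_inv {j : ℤ} (hj : 0 ≤ j) :
    IsSigmaOnePositive ((σ₂ ^ (-j) * σ₁)⁻¹ * (σ₂ ^ (-(j + 1)) * σ₁)⁻¹ * (σ₂ ^ (-j) * σ₁)) := by
  have h : (σ₂ ^ (-j) * σ₁)⁻¹ * (σ₂ ^ (-(j + 1)) * σ₁)⁻¹ * (σ₂ ^ (-j) * σ₁)
      = σ₂ * σ₁ ^ (j + 1) * (σ₂⁻¹ * σ₂⁻¹) :=
    calc _ = σ₁⁻¹ * σ₂ ^ j * (σ₁⁻¹ * σ₂ ^ (1 : ℤ) * σ₁) := by group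
    _ = σ₁⁻¹ * σ₂ ^ (j + 1) * σ₁ * σ₂⁻¹ := by rw [sigma1_inv_mul_sigma2_zpow_mul_sigma1]; group
    _ = _ := by rw [sigma1_inv_mul_sigma2_zpow_mul_sigma1]; group
  rw [h]
  exact isSigmaOnePositive_mul_mul sigma2_mem_sigmaOneNonneg
    (isSigmaOnePositive_sigma1_zpow (by omega))
    (mul_mem sigma2_inv_mem_sigmaOneNonneg sigma2_inv_mem_sigmaOneNonneg)

/-- A left order on `B₃` whose positive cone consists exactly of the σ₁-positive
elements together with the positive powers of σ₂ (i.e. the Dehornoy ordering) is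
approximated by its conjugates by the elements `σ₂⁻ʲσ₁`. -/
theorem stmt_11 (r : B₃ → B₃ → Prop) (hr : IsLeftOrder r)
    (hcone : {β : B₃ | r 1 β} =
      {β : B₃ | IsSigmaOnePositive β} ∪ {β : B₃ | ∃ k : ℕ, 1 ≤ k ∧ β = σ₂ ^ k}) :
    ∀ S : Finset B₃, ∃ j : ℤ, 1 ≤ j ∧
      (∀ a ∈ S, ∀ b ∈ S, (conjOrder r (σ₂ ^ (-j) * σ₁) a b ↔ r a b)) ∧
      conjOrder r (σ₂ ^ (-j) * σ₁) ≠ r := by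
  have hcone' (β : B₃) : r 1 β ↔ IsSigmaOnePositive β ∨ ∃ k : ℕ, 1 ≤ k ∧ β = σ₂ ^ k :=
    Set.ext_iff.1 hcone β
  have hpos (g : B₃) (hg : r 1 g) :
      ∀ᶠ j : ℤ in atTop, r 1 ((σ₂ ^ (-j) * σ₁)⁻¹ * g * (σ₂ ^ (-j) * σ₁)) := by
    refine Eventually.mono ?_ fun j hj => (hcone' _).2 (Or.inl hj)
    rcases (hcone' g).1 hg with hg | ⟨k, hk, rfl⟩
    · exact hg.eventually_conj
    · exact Eventually.of_forall (isSigmaOnePositive_conj_sigma2_pow hk)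
  intro S
  obtain ⟨j, hS, hj⟩ := ((hr.eventually_conjOrder_iff hpos S).and (eventually_ge_atTop 1)).exists
  refine ⟨j, hj, hS, hr.conjOrder_ne (g := σ₂ ^ (-(j + 1)) * σ₁) ?_ ?_⟩
  · exact (hcone' _).2 (Or.inl (isSigmaOnePositive_sigma2_zpow_mul_sigma1 _))
  · exact (hcone' _).2 (Or.inl (isSigmaOnePositive_conj_inv (by omega)))
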